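/- With u the unitriangular matrix with rows (1, δ, ϖ), (0,1,1), (0,0,1), the intersection u⁻¹ Q⁰_H u ∩ Q̄_G is trivial: if h has rows (a,b,0),(0,1,0),(0,0,x) with a, x invertible, and u⁻¹ h u is lower triangular, then a = x = 1 and b = 0, i.e. h is the identity. -/

import Mathlib

namespace Matrix

variable {R : Type*} [CommRing R]

theorem inv_unitriangular_three (δ ϖ : R) :
    (!![1, δ, ϖ; 0, 1, 1; 0, 0, 1] : Matrix (Fin 3) (Fin 3) R)⁻¹ =
      !![1, -δ, δ - ϖ; 0, 1, -1; 0, 0, 1] := by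
  refine inv_eq_right_inv ?_
  ext i j
  fin_cases i <;> fin_cases j <;> simp [mul_apply, Fin.sum_univ_three]; ring

theorem unitriangular_three_conj (δ ϖ a b x : R) :
    (!![1, δ, ϖ; 0, 1, 1; 0, 0, 1] : Matrix (Fin 3) (Fin 3) R)⁻¹ *
        !![a, b, 0; 0, 1, 0; 0, 0, x] * !![1, δ, ϖ; 0, 1, 1; 0, 0, 1] =
      !![a, (a - 1) * δ + b, (a - 1) * ϖ + b + (δ - ϖ) * (x - 1); 0, 1, 1 - x; 0, 0, x] := by
  rw [inv_unitriangular_three]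
  ext i j
  fin_cases i <;> fin_cases j <;> simp [mul_apply, Fin.sum_univ_three] <;> ring

end Matrix

theorem stmt6_general (δ ϖ a b x : ℂ) (hδϖ : δ ≠ ϖ)
    (hlow : ∀ i j : Fin 3, i < j →
      ((!![1, δ, ϖ; 0, 1, 1; 0, 0, 1] : Matrix (Fin 3) (Fin 3) ℂ)⁻¹ *
        !![a, b, 0; 0, 1, 0; 0, 0, x] * !![1, δ, ϖ; 0, 1, 1; 0, 0, 1]) i j = 0) :
    a = 1 ∧ x = 1 ∧ b = 0 := by
  simp only [Matrix.unitriangular_three_conj] at hlow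
  have h01 : (a - 1) * δ + b = 0 := hlow 0 1 (by decide)
  have h02 : (a - 1) * ϖ + b + (δ - ϖ) * (x - 1) = 0 := hlow 0 2 (by decide)
  have h12 : 1 - x = 0 := hlow 1 2 (by decide)
  have hx1 : x = 1 := (sub_eq_zero.mp h12).symm
  subst hx1
  have ha1 : a = 1 := by
    have h : (δ - ϖ) * (a - 1) = 0 := by linear_combination h01 - h02
    exact sub_eq_zero.mp ((mul_eq_zero.mp h).resolve_left (sub_ne_zero.mpr hδϖ))
  subst ha1
  exact ⟨rfl, rfl, by linear_combination h01⟩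

/-- If `h = h(a,b,x)` with `a,x` invertible and `u⁻¹ h u` is lower triangular,
then `h` is the identity: `a = 1`, `x = 1`, `b = 0`. -/
theorem stmt6 (δ ϖ a b x : ℂ) (hδϖ : δ ≠ ϖ) (ha : a ≠ 0) (hx : x ≠ 0)
    (hlow : ∀ i j : Fin 3, i < j →
      ((!![1, δ, ϖ; 0, 1, 1; 0, 0, 1] : Matrix (Fin 3) (Fin 3) ℂ)⁻¹ *
        !![a, b, 0; 0, 1, 0; 0, 0, x] * !![1, δ, ϖ; 0, 1, 1; 0, 0, 1]) i j = 0) :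
    a = 1 ∧ x = 1 ∧ b = 0 :=
  stmt6_general δ ϖ a b x hδϖ hlow
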